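/- arXiv:1402.1317 — 3 statements merged into one kernel-verified Lean document; each statement's English description precedes it below -/
import Mathlib

section
/- Let ≼ be the relation on ℕ × ℕ defined by (m₁,m₂) ≼ (n₁,n₂) if and only if there exists a 𝒥-morphism datum from (m₁,m₂) to (n₁,n₂) (a pair of injections α₁ : Fin m₁ → Fin n₁ and α₂ : Fin m₂ → Fin n₂ together with a bijection between the complements of their images). Then the equivalence relation generated by ≼ relates (m₁,m₂) and (n₁,n₂) if and only if m₂ + n₁ = m₁ + n₂. Consequently, the set of connected components of the category 𝒥 is in bijection with ℤ via the degree map (m₁,m₂) ↦ m₂ − m₁. -/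
/-- A morphism datum in the indexing category `𝒥` of Sagave–Schlichtkrull from `(m₁, m₂)` to
`(n₁, n₂)`: a pair of injections `α₁ : Fin m₁ → Fin n₁` and `α₂ : Fin m₂ → Fin n₂` together
with a bijection between the complements of their images. -/
structure JHomDatum (m₁ m₂ n₁ n₂ : ℕ) where
  α₁ : Fin m₁ → Fin n₁
  α₂ : Fin m₂ → Fin n₂
  inj₁ : Function.Injective α₁
  inj₂ : Function.Injective α₂
  ρ : {x : Fin n₁ // x ∉ Set.range α₁} ≃ {y : Fin n₂ // y ∉ Set.range α₂}

/-- The relation `≼` on `ℕ × ℕ`: `(m₁, m₂) ≼ (n₁, n₂)` iff there exists a `𝒥`-morphism datum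
from `(m₁, m₂)` to `(n₁, n₂)`. -/
def JRel (p q : ℕ × ℕ) : Prop := Nonempty (JHomDatum p.1 p.2 q.1 q.2)

/-!
A datum `(m₁, m₂) → (n₁, n₂)` forces `n₁ - m₁ = n₂ - m₂`, since `ρ` matches the two complements
of the images; so the degree `m₂ - m₁` is constant along the generated equivalence relation.
Conversely, two objects of the same degree `(m₁, m₂)` and `(n₁, n₂)` both map to
`(m₁ + n₁, m₂ + n₁) = (n₁ + m₁, n₂ + m₁)` by the standard inclusions `Fin.castAdd`, so the degree
is injective on components; it is clearly onto `ℤ`.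
-/

open Relation

lemma Nat.card_compl_range_of_injective {α β : Type*} [Finite β] {f : α → β}
    (hf : Function.Injective f) :
    Nat.card {y // y ∉ Set.range f} = Nat.card β - Nat.card α := by
  have hsum := Set.ncard_add_ncard_compl (Set.range f)
  rw [Set.ncard_range_of_injective hf, ← Nat.card_coe_set_eq] at hsum
  exact Nat.eq_sub_of_add_eq' hsum

def jDegree (p : ℕ × ℕ) : ℤ := p.2 - p.1

lemma JRel.jDegree_eq {p q : ℕ × ℕ} (h : JRel p q) : jDegree p = jDegree q := by
  obtain ⟨d⟩ := h
  have h₁ : p.1 ≤ q.1 := by simpa using Fintype.card_le_of_injective _ d.inj₁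
  have h₂ : p.2 ≤ q.2 := by simpa using Fintype.card_le_of_injective _ d.inj₂
  have hρ : q.1 - p.1 = q.2 - p.2 := by
    simpa only [Nat.card_compl_range_of_injective d.inj₁, Nat.card_compl_range_of_injective d.inj₂,
      Nat.card_eq_fintype_card, Fintype.card_fin] using Nat.card_congr d.ρ
  unfold jDegree
  omega

lemma jRel_add (m₁ m₂ k : ℕ) : JRel (m₁, m₂) (m₁ + k, m₂ + k) := by
  have hcard (m : ℕ) : Nat.card {x // x ∉ Set.range (Fin.castAdd (n := m) k)} = k := by
    simp only [Nat.card_compl_range_of_injective (Fin.castAdd_injective m k),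
      Nat.card_eq_fintype_card, Fintype.card_fin, Nat.add_sub_cancel_left]
  obtain ⟨ρ⟩ : Nonempty ({x // x ∉ Set.range (Fin.castAdd (n := m₁) k)} ≃
      {y // y ∉ Set.range (Fin.castAdd (n := m₂) k)}) := by
    rw [← Finite.card_eq, hcard, hcard]
  exact ⟨⟨_, _, Fin.castAdd_injective m₁ k, Fin.castAdd_injective m₂ k, ρ⟩⟩

lemma eqvGen_jRel_of_jDegree_eq {p q : ℕ × ℕ} (h : jDegree p = jDegree q) :
    EqvGen JRel p q := by
  have hmeet : (p.1 + q.1, p.2 + q.1) = (q.1 + p.1, q.2 + p.1) := by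
    unfold jDegree at h
    ext <;> simp only <;> omega
  refine .trans _ _ _ (.rel _ _ (jRel_add p.1 p.2 q.1)) (.symm _ _ ?_)
  rw [hmeet]
  exact .rel _ _ (jRel_add q.1 q.2 p.1)

def componentDegree : Quot JRel → ℤ := Quot.lift jDegree fun _ _ => JRel.jDegree_eq

lemma eqvGen_jRel_iff {p q : ℕ × ℕ} : EqvGen JRel p q ↔ jDegree p = jDegree q :=
  ⟨fun h => congrArg componentDegree (Quot.eqvGen_sound h), eqvGen_jRel_of_jDegree_eq⟩

lemma jDegree_surjective : Function.Surjective jDegree :=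
  fun z => ⟨((-z).toNat, z.toNat), by simp only [jDegree]; omega⟩

lemma componentDegree_bijective : Function.Bijective componentDegree := by
  refine ⟨fun a b hab => ?_, (Quot.surjective_lift _).mpr jDegree_surjective⟩
  induction a using Quot.ind
  induction b using Quot.ind
  exact Quot.eqvGen_sound (eqvGen_jRel_iff.mpr hab)

/-- The equivalence relation generated by `≼` relates `(m₁, m₂)` and `(n₁, n₂)` if and only if
`m₂ + n₁ = m₁ + n₂`.  Consequently, the set of connected components of the category `𝒥`
(the quotient of the set of objects by this equivalence relation) is in bijection with `ℤ`
via the degree map `(m₁, m₂) ↦ m₂ - m₁`. -/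
theorem jRel_eqvGen_iff_and_components_equiv_int :
    (∀ m₁ m₂ n₁ n₂ : ℕ,
      Relation.EqvGen JRel (m₁, m₂) (n₁, n₂) ↔ m₂ + n₁ = m₁ + n₂) ∧
    ∃ e : Quot JRel ≃ ℤ,
      ∀ m₁ m₂ : ℕ, e (Quot.mk JRel (m₁, m₂)) = (m₂ : ℤ) - (m₁ : ℤ) := by
  refine ⟨fun m₁ m₂ n₁ n₂ => eqvGen_jRel_iff.trans ?_,
    .ofBijective _ componentDegree_bijective, fun _ _ => rfl⟩
  simp only [jDegree]
  omega
end

section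
/- Let m₁, m₂, n₁, n₂ be natural numbers, let α₁ : Fin m₁ → Fin n₁ and α₂ : Fin m₂ → Fin n₂ be injective maps, and let ρ be a bijection from the complement of the image of α₁ in Fin n₁ to the complement of the image of α₂ in Fin n₂. Let G be a subgroup of Perm(Fin m₁) × Perm(Fin m₂) whose projection to Perm(Fin m₁) is injective. Suppose σ ∈ Perm(Fin n₂) and (γ₁,γ₂) ∈ G satisfy: α₁ ∘ γ₁ = α₁, σ ∘ α₂ = α₂ ∘ γ₂, and σ(ρ(j)) = ρ(j) for every j in the complement of the image of α₁. Then γ₁ = 1, γ₂ = 1 and σ = 1. Hence the action of Perm(Fin n₂) on the set 𝒥((m₁,m₂),(n₁,n₂))/G of G-orbits of morphism data, given by post-composition in the second coordinate, is free. -/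
open Function

theorem Equiv.Perm.eq_one_of_comp_eq_self {ι β : Type*} {f : ι → β} (hf : Injective f)
    {γ : Equiv.Perm ι} (h : ∀ i, f (γ i) = f i) : γ = 1 :=
  Equiv.ext fun i => hf (h i)

theorem Subgroup.eq_one_of_one_mk_mem_of_injective_fst {H K : Type*} [Group H] [Group K]
    {G : Subgroup (H × K)} (hG : Injective fun g : G => (g : H × K).1) {k : K}
    (hk : ((1 : H), k) ∈ G) : k = 1 :=
  congrArg (fun g : G => (g : H × K).2) (hG rfl : (⟨(1, k), hk⟩ : G) = 1)

theorem Equiv.Perm.eq_one_of_fixes_range_of_fixes_compl {ι β : Type*} {f : ι → β}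
    {σ : Equiv.Perm β} (h_range : ∀ i, σ (f i) = f i) (h_compl : ∀ y ∉ Set.range f, σ y = y) :
    σ = 1 := by
  ext y
  by_cases hy : y ∈ Set.range f
  · obtain ⟨i, rfl⟩ := hy
    exact h_range i
  · exact h_compl y hy

theorem singleObjJSpace_stronglyFree_general (m₁ m₂ n₁ n₂ : ℕ)
    (α₁ : Fin m₁ → Fin n₁) (α₂ : Fin m₂ → Fin n₂)
    (hα₁ : Function.Injective α₁)
    (ρ : {x : Fin n₁ // x ∉ Set.range α₁} ≃ {y : Fin n₂ // y ∉ Set.range α₂})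
    (G : Subgroup (Equiv.Perm (Fin m₁) × Equiv.Perm (Fin m₂)))
    (hG : Function.Injective fun g : G =>
      (g : Equiv.Perm (Fin m₁) × Equiv.Perm (Fin m₂)).1)
    (σ : Equiv.Perm (Fin n₂))
    (γ₁ : Equiv.Perm (Fin m₁)) (γ₂ : Equiv.Perm (Fin m₂)) (hγ : (γ₁, γ₂) ∈ G)
    (h₁ : ∀ i, α₁ (γ₁ i) = α₁ i)
    (h₂ : ∀ i, σ (α₂ i) = α₂ (γ₂ i))
    (h₃ : ∀ j : {x : Fin n₁ // x ∉ Set.range α₁}, σ (ρ j).1 = (ρ j).1) :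
    γ₁ = 1 ∧ γ₂ = 1 ∧ σ = 1 := by
  obtain rfl : γ₁ = 1 := Equiv.Perm.eq_one_of_comp_eq_self hα₁ h₁
  obtain rfl : γ₂ = 1 := Subgroup.eq_one_of_one_mk_mem_of_injective_fst hG hγ
  refine ⟨rfl, rfl, Equiv.Perm.eq_one_of_fixes_range_of_fixes_compl (f := α₂) h₂ ?_⟩
  intro y hy
  simpa using h₃ (ρ.symm ⟨y, hy⟩)

/-- Strong freeness in the second variable for the `𝒥`-space `𝒥((0,0), -)`:
given a morphism datum `(α₁, α₂, ρ)` in `𝒥((m₁,m₂),(n₁,n₂))` and a subgroup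
`G ≤ Perm(Fin m₁) × Perm(Fin m₂)` whose projection to the first factor is injective,
if `σ ∈ Perm(Fin n₂)` and `(γ₁, γ₂) ∈ G` satisfy `α₁ ∘ γ₁ = α₁`, `σ ∘ α₂ = α₂ ∘ γ₂` and
`σ(ρ(j)) = ρ(j)` for every `j` in the complement of the image of `α₁`, then
`γ₁ = 1`, `γ₂ = 1` and `σ = 1`.  Hence `Perm(Fin n₂)` acts freely (by post-composition in
the second coordinate) on the set of `G`-orbits of morphism data. -/
theorem singleObjJSpace_stronglyFree (m₁ m₂ n₁ n₂ : ℕ)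
    (α₁ : Fin m₁ → Fin n₁) (α₂ : Fin m₂ → Fin n₂)
    (hα₁ : Function.Injective α₁) (hα₂ : Function.Injective α₂)
    (ρ : {x : Fin n₁ // x ∉ Set.range α₁} ≃ {y : Fin n₂ // y ∉ Set.range α₂})
    (G : Subgroup (Equiv.Perm (Fin m₁) × Equiv.Perm (Fin m₂)))
    (hG : Function.Injective fun g : G =>
      (g : Equiv.Perm (Fin m₁) × Equiv.Perm (Fin m₂)).1)
    (σ : Equiv.Perm (Fin n₂))
    (γ₁ : Equiv.Perm (Fin m₁)) (γ₂ : Equiv.Perm (Fin m₂)) (hγ : (γ₁, γ₂) ∈ G)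
    (h₁ : ∀ i, α₁ (γ₁ i) = α₁ i)
    (h₂ : ∀ i, σ (α₂ i) = α₂ (γ₂ i))
    (h₃ : ∀ j : {x : Fin n₁ // x ∉ Set.range α₁}, σ (ρ j).1 = (ρ j).1) :
    γ₁ = 1 ∧ γ₂ = 1 ∧ σ = 1 :=
  singleObjJSpace_stronglyFree_general m₁ m₂ n₁ n₂ α₁ α₂ hα₁ ρ G hG σ γ₁ γ₂ hγ h₁ h₂ h₃
end

section
/- For every commutative monoid M, the maps M^{S¹_n} → M^{n+1} sending f to (f(a_{n,0}), f(a_{n,1}), …, f(a_{n,n})) assemble into an isomorphism of simplicial commutative monoids M ⊗ S¹ ≅ B^cy(M), i.e., these maps are bijective monoid homomorphisms compatible with all face and degeneracy maps. Moreover, under this isomorphism, the map M ⊗ S¹ → M induced by the collapse map S¹ → Δ[0] corresponds to the augmentation B^cy(M) → M that multiplies all coordinates of a tuple (with M regarded as a constant simplicial commutative monoid). -/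
abbrev Delta1 (q : ℕ) := {g : Fin (q + 1) → Fin 2 // ∀ i j : Fin (q + 1), i ≤ j → g i ≤ g j}
def IsCst {q : ℕ} (g : Delta1 q) : Prop := ∀ i, g.1 i = g.1 0
instance {q : ℕ} (g : Delta1 q) : Decidable (IsCst g) :=
  inferInstanceAs (Decidable (∀ i, g.1 i = g.1 0))
instance circleSetoid (q : ℕ) : Setoid (Delta1 q) where
  r g g' := g = g' ∨ (IsCst g ∧ IsCst g')
  iseqv := by
    refine ⟨fun g => Or.inl rfl, ?_, ?_⟩
    · rintro g g' (rfl | h)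
      · exact Or.inl rfl
      · exact Or.inr ⟨h.2, h.1⟩
    · rintro g g' g'' (rfl | h) (rfl | h')
      · exact Or.inl rfl
      · exact Or.inr h'
      · exact Or.inr h
      · exact Or.inr ⟨h.1, h'.2⟩
instance (q : ℕ) : DecidableRel (α := Delta1 q) (· ≈ ·) := fun g g' =>
  inferInstanceAs (Decidable (g = g' ∨ (IsCst g ∧ IsCst g')))
def S1q (q : ℕ) : Type := Quotient (circleSetoid q)
instance (q : ℕ) : Fintype (S1q q) := inferInstanceAs (Fintype (Quotient (circleSetoid q)))
instance (q : ℕ) : DecidableEq (S1q q) :=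
  inferInstanceAs (DecidableEq (Quotient (circleSetoid q)))
def aSimplex (q k : ℕ) : Delta1 q :=
  ⟨fun i => if (i : ℕ) < k then 0 else 1, by
    intro i j hij
    have hij' : (i : ℕ) ≤ (j : ℕ) := hij
    dsimp only
    split_ifs with h1 h2
    · exact le_rfl
    · exact Fin.zero_le _
    · exact absurd (by omega) h1
    · exact le_rfl⟩

/-- Precomposition of simplices of `S¹` with a monotone map, i.e. the structure map of the
simplicial set `S¹` associated to a morphism of the simplex category. -/
def S1precomp {p q : ℕ} (θ : Fin (p + 1) → Fin (q + 1)) (hθ : Monotone θ) :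
    S1q q → S1q p :=
  Quotient.map (fun g => ⟨g.1 ∘ θ, fun a b hab => g.2 _ _ (hθ hab)⟩)
    (by
      rintro g g' (rfl | ⟨h, h'⟩)
      · exact Or.inl rfl
      · exact Or.inr ⟨fun a => (h _).trans (h _).symm, fun a => (h' _).trans (h' _).symm⟩)

/-- The map `δ_i^* : S¹_{q+1} → S¹_q` induced by the `i`-th coface `δ_i = Fin.succAbove i`. -/
def S1face {q : ℕ} (i : Fin (q + 2)) : S1q (q + 1) → S1q q :=
  S1precomp i.succAbove (Fin.strictMono_succAbove i).monotone

/-- The map `σ_i^* : S¹_q → S¹_{q+1}` induced by the `i`-th codegeneracy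
`σ_i = Fin.predAbove i`. -/
def S1degen {q : ℕ} (i : Fin (q + 1)) : S1q q → S1q (q + 1) :=
  S1precomp (Fin.predAbove i) (Fin.predAbove_right_monotone i)

/-- Pushforward (transfer) of an `M`-valued function along a map of finite sets, by taking
products over fibers.  For `t = θ^* : S¹_n → S¹_m` this is the structure map
`(M ⊗ S¹)_n → (M ⊗ S¹)_m` of the tensor `M ⊗ S¹`. -/
def transfer {α β : Type*} [Fintype α] [DecidableEq β] {M : Type*} [CommMonoid M]
    (t : α → β) (f : α → M) : β → M :=
  fun b => ∏ a ∈ Finset.univ.filter fun a => t a = b, f a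

/-- The canonical map `(M ⊗ S¹)_q = M^{S¹_q} → M^{q+1} = B^cy_q(M)`,
`f ↦ (f(a_{q,0}), f(a_{q,1}), …, f(a_{q,q}))`. -/
def phiTensor (M : Type*) [CommMonoid M] (q : ℕ) (f : S1q q → M) : Fin (q + 1) → M :=
  fun k => f ⟦aSimplex q k⟧

/-- `i`-th face of the cyclic bar construction (multiplicative). -/
def bcyDM {M : Type*} [CommMonoid M] {q : ℕ} (i : Fin (q + 2)) (x : Fin (q + 2) → M) :
    Fin (q + 1) → M :=
  if i = Fin.last (q + 1) then
    fun j => if j = 0 then x (Fin.last (q + 1)) * x 0 else x j.castSucc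
  else fun j =>
    if (j : ℕ) < (i : ℕ) then x j.castSucc
    else if (j : ℕ) = (i : ℕ) then x j.castSucc * x j.succ
    else x j.succ

/-- `i`-th degeneracy of the cyclic bar construction (multiplicative): inserts the unit
after the `i`-th entry. -/
def bcySM {M : Type*} [CommMonoid M] {q : ℕ} (i : Fin (q + 1)) (x : Fin (q + 1) → M) :
    Fin (q + 2) → M := fun j =>
  if h : (j : ℕ) ≤ (i : ℕ) then x ⟨j, by have := i.isLt; omega⟩
  else if h2 : (j : ℕ) = (i : ℕ) + 1 then 1
  else x ⟨(j : ℕ) - 1, by have := j.isLt; omega⟩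

/-! The `q`-simplices of `S¹` are the step functions `a_{q,k}`, `0 ≤ k ≤ q`, the second constant
map `a_{q,q+1}` being identified with `a_{q,0}`. This enumeration `Fin (q + 1) ≃ S¹_q` identifies
`M ⊗ S¹` with `M^{q+1}` in each degree. Precomposing a step function with a monotone map gives a
step function again, so the simplicial operators of `S¹` become explicit maps of index sets, and
transfer along them is computed fibre by fibre: `δ_i^*` merges the indices `i` and `i + 1`,
cyclically for `i = q + 1` (whence the entry `x_q x_0`), and the fibre of `σ_i^*` over `i + 1`
is empty, which inserts the unit. -/

lemma Fin.val_succAbove {n : ℕ} (i : Fin (n + 1)) (j : Fin n) :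
    (i.succAbove j : ℕ) = if (j : ℕ) < i then (j : ℕ) else (j : ℕ) + 1 := by
  unfold Fin.succAbove
  split_ifs <;> simp_all [Fin.lt_def]

lemma Fin.val_predAbove {n : ℕ} (i : Fin n) (j : Fin (n + 1)) :
    (i.predAbove j : ℕ) = if (i : ℕ) < j then (j : ℕ) - 1 else j := by
  unfold Fin.predAbove
  split_ifs with h₁ h₂ <;> rw [Fin.lt_def, Fin.val_castSucc] at h₁ <;> simp <;> omega

section transfer

variable {α α' β β' M : Type*} [Fintype α] [Fintype α'] [DecidableEq β] [DecidableEq β']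
  [CommMonoid M]

lemma transfer_apply_eq_prod_of_fiber {t : α → β} {b : β} {s : Finset α}
    (hs : ∀ a, t a = b ↔ a ∈ s) (f : α → M) : transfer t f b = ∏ a ∈ s, f a := by
  rw [transfer]
  congr 1
  ext a
  simp [hs]

lemma transfer_comp_equiv (e : α' ≃ α) (e' : β' ≃ β) {t : α → β} {τ : α' → β'}
    (h : ∀ a, t (e a) = e' (τ a)) (f : α → M) : transfer t f ∘ e' = transfer τ (f ∘ e) := by
  funext b
  simp only [transfer, Function.comp_apply, Finset.prod_filter]
  rw [← e.prod_comp]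
  simp only [h, e'.apply_eq_iff_eq]

end transfer

lemma aSimplex_apply_val {q k : ℕ} (i : Fin (q + 1)) :
    ((aSimplex q k).1 i : ℕ) = if (i : ℕ) < k then 0 else 1 := by
  simp only [aSimplex]
  split_ifs <;> rfl

lemma Delta1.exists_eq_aSimplex {q : ℕ} (g : Delta1 q) : ∃ k ≤ q + 1, g = aSimplex q k := by
  have hP : ∃ n, q + 1 ≤ n ∨ ∃ h : n < q + 1, g.1 ⟨n, h⟩ = 1 := ⟨q + 1, Or.inl le_rfl⟩
  refine ⟨Nat.find hP, Nat.find_le (Or.inl le_rfl), Subtype.ext (funext fun i => Fin.ext ?_)⟩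
  rw [aSimplex_apply_val]
  split_ifs with h
  · obtain ⟨-, hne⟩ := not_or.1 (Nat.find_min hP h)
    have : g.1 i ≠ 1 := fun h1 => hne ⟨i.isLt, h1⟩
    omega
  · obtain hk | ⟨hk, hgk⟩ := Nat.find_spec hP
    · omega
    · have := g.2 ⟨_, hk⟩ i (not_lt.1 h)
      rw [hgk] at this
      omega

lemma isCst_aSimplex_iff {q k : ℕ} : IsCst (aSimplex q k) ↔ k = 0 ∨ q + 1 ≤ k := by
  refine ⟨fun h => ?_, fun h i => Fin.ext ?_⟩
  · by_contra! ⟨hk0, hkq⟩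
    have := congrArg Fin.val (h ⟨k, hkq⟩)
    rw [aSimplex_apply_val, aSimplex_apply_val, Fin.val_zero, Fin.val_mk] at this
    split_ifs at this <;> omega
  · rw [aSimplex_apply_val, aSimplex_apply_val, Fin.val_zero]
    have := i.isLt
    split_ifs <;> omega

lemma aSimplex_injOn (q : ℕ) : Set.InjOn (aSimplex q) (Set.Iic (q + 1)) := by
  intro k hk m hm h
  rw [Set.mem_Iic] at hk hm
  by_contra hne
  have := congrArg (fun g : Delta1 q => (g.1 ⟨min k m, by omega⟩ : ℕ)) h
  simp only [aSimplex_apply_val] at this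
  split_ifs at this <;> omega

lemma mk_aSimplex_add_one (q : ℕ) : (⟦aSimplex q (q + 1)⟧ : S1q q) = ⟦aSimplex q 0⟧ :=
  Quotient.sound <|
    Or.inr ⟨isCst_aSimplex_iff.2 (Or.inr le_rfl), isCst_aSimplex_iff.2 (Or.inl rfl)⟩

lemma mk_aSimplex_bijective (q : ℕ) :
    Function.Bijective fun k : Fin (q + 1) => (⟦aSimplex q k⟧ : S1q q) := by
  refine ⟨fun k m h => ?_, fun x => ?_⟩
  · rcases Quotient.exact h with h | ⟨hk, hm⟩
    · exact Fin.ext (aSimplex_injOn q (Set.mem_Iic.2 (by omega)) (Set.mem_Iic.2 (by omega)) h)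
    · rw [isCst_aSimplex_iff] at hk hm
      ext
      omega
  · induction x using Quotient.inductionOn with
    | h g =>
      obtain ⟨k, hk, rfl⟩ := g.exists_eq_aSimplex
      rcases hk.lt_or_eq with hk | rfl
      · exact ⟨⟨k, hk⟩, rfl⟩
      · exact ⟨0, (mk_aSimplex_add_one q).symm⟩

noncomputable def circleEquiv (q : ℕ) : Fin (q + 1) ≃ S1q q :=
  Equiv.ofBijective _ (mk_aSimplex_bijective q)

lemma circleEquiv_apply {q : ℕ} (k : Fin (q + 1)) : circleEquiv q k = ⟦aSimplex q k⟧ := rfl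

lemma S1precomp_mk_aSimplex {p q k n : ℕ} (θ : Fin (p + 1) → Fin (q + 1)) (hθ : Monotone θ)
    (h : ∀ j, (θ j : ℕ) < k ↔ (j : ℕ) < n) :
    S1precomp θ hθ ⟦aSimplex q k⟧ = ⟦aSimplex p n⟧ := by
  refine congrArg _ (Subtype.ext (funext fun j => Fin.ext ?_))
  simp only [Function.comp_apply, aSimplex_apply_val, h]

/-- The `i`-th face of `B^cy` multiplies the entries in each fibre of this map. -/
def bcyFaceIndex {q : ℕ} (i k : Fin (q + 2)) : Fin (q + 1) :=
  ⟨if (i : ℕ) < k then (k : ℕ) - 1 else if (k : ℕ) = q + 1 then 0 else k, by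
    have := k.isLt; split_ifs <;> omega⟩

lemma bcyFaceIndex_val {q : ℕ} (i k : Fin (q + 2)) :
    (bcyFaceIndex i k : ℕ) =
      if (i : ℕ) < k then (k : ℕ) - 1 else if (k : ℕ) = q + 1 then 0 else k :=
  rfl

lemma S1face_circleEquiv {q : ℕ} (i k : Fin (q + 2)) :
    S1face i (circleEquiv (q + 1) k) = circleEquiv q (bcyFaceIndex i k) := by
  have hface : S1face i (circleEquiv (q + 1) k) =
      ⟦aSimplex q (if (i : ℕ) < k then (k : ℕ) - 1 else k)⟧ :=
    S1precomp_mk_aSimplex _ _ fun j => by rw [Fin.val_succAbove]; split_ifs <;> omega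
  rw [hface, circleEquiv_apply, bcyFaceIndex]
  split_ifs with hik hk
  · rfl
  · exact (congrArg (fun n => (⟦aSimplex q n⟧ : S1q q)) hk).trans (mk_aSimplex_add_one q)
  · rfl

lemma S1degen_circleEquiv {q : ℕ} (i k : Fin (q + 1)) :
    S1degen i (circleEquiv q k) = circleEquiv (q + 1) (i.succ.succAbove k) :=
  S1precomp_mk_aSimplex _ _ fun j => by
    rw [Fin.val_predAbove, Fin.val_succAbove, Fin.val_succ]
    split_ifs <;> omega

section bcy

variable {M : Type*} [CommMonoid M] {q : ℕ}

lemma bcyDM_last_eq_transfer (x : Fin (q + 2) → M) :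
    bcyDM (Fin.last (q + 1)) x = transfer (bcyFaceIndex (Fin.last (q + 1))) x := by
  funext j
  rw [bcyDM, if_pos rfl]
  split_ifs with hj0
  · rw [transfer_apply_eq_prod_of_fiber (s := {Fin.last _, 0}),
      Finset.prod_pair Fin.last_pos.ne']
    intro k
    rw [Fin.ext_iff, bcyFaceIndex_val]
    simp only [Finset.mem_insert, Finset.mem_singleton, Fin.ext_iff, Fin.val_last,
      Fin.val_zero, hj0]
    have := k.isLt
    split_ifs <;> omega
  · rw [transfer_apply_eq_prod_of_fiber (s := {j.castSucc}), Finset.prod_singleton]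
    intro k
    rw [Fin.ext_iff, bcyFaceIndex_val]
    simp only [Finset.mem_singleton, Fin.ext_iff, Fin.val_castSucc, Fin.val_last]
    have : (j : ℕ) ≠ 0 := fun h => hj0 (Fin.ext h)
    split_ifs <;> omega

lemma bcyDM_castSucc_eq_transfer (i : Fin (q + 1)) (x : Fin (q + 2) → M) :
    bcyDM i.castSucc x = transfer (bcyFaceIndex i.castSucc) x := by
  funext j
  have hi := i.isLt
  rw [bcyDM, if_neg (Fin.castSucc_lt_last i).ne]
  simp only [Fin.val_castSucc]
  split_ifs with hji hji'
  · rw [transfer_apply_eq_prod_of_fiber (s := {j.castSucc}), Finset.prod_singleton]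
    intro k
    rw [Fin.ext_iff, bcyFaceIndex_val]
    simp only [Finset.mem_singleton, Fin.ext_iff, Fin.val_castSucc]
    split_ifs <;> omega
  · rw [transfer_apply_eq_prod_of_fiber (s := {j.castSucc, j.succ}),
      Finset.prod_pair Fin.castSucc_lt_succ.ne]
    intro k
    rw [Fin.ext_iff, bcyFaceIndex_val]
    simp only [Finset.mem_insert, Finset.mem_singleton, Fin.ext_iff, Fin.val_castSucc,
      Fin.val_succ]
    split_ifs <;> omega
  · rw [transfer_apply_eq_prod_of_fiber (s := {j.succ}), Finset.prod_singleton]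
    intro k
    rw [Fin.ext_iff, bcyFaceIndex_val]
    simp only [Finset.mem_singleton, Fin.ext_iff, Fin.val_succ, Fin.val_castSucc]
    split_ifs <;> omega

lemma bcyDM_eq_transfer (i : Fin (q + 2)) (x : Fin (q + 2) → M) :
    bcyDM i x = transfer (bcyFaceIndex i) x := by
  induction i using Fin.lastCases with
  | last => exact bcyDM_last_eq_transfer x
  | cast i => exact bcyDM_castSucc_eq_transfer i x

lemma bcySM_eq_transfer (i : Fin (q + 1)) (x : Fin (q + 1) → M) :
    bcySM i x = transfer i.succ.succAbove x := by
  funext j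
  have hi := i.isLt
  have hj := j.isLt
  rw [bcySM]
  split_ifs with hji hji'
  · rw [transfer_apply_eq_prod_of_fiber (s := {⟨j, by omega⟩}), Finset.prod_singleton]
    intro k
    rw [Fin.ext_iff, Fin.val_succAbove]
    simp only [Finset.mem_singleton, Fin.ext_iff, Fin.val_succ]
    split_ifs <;> omega
  · rw [transfer_apply_eq_prod_of_fiber (s := ∅), Finset.prod_empty]
    intro k
    rw [Fin.ext_iff, Fin.val_succAbove]
    simp only [Finset.notMem_empty, iff_false, Fin.val_succ]
    split_ifs <;> omega
  · rw [transfer_apply_eq_prod_of_fiber (s := {⟨j - 1, by omega⟩}), Finset.prod_singleton]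
    intro k
    rw [Fin.ext_iff, Fin.val_succAbove]
    simp only [Finset.mem_singleton, Fin.ext_iff, Fin.val_succ]
    split_ifs <;> omega

end bcy

/-- For every commutative monoid `M`, the maps `M^{S¹_q} → M^{q+1}`,
`f ↦ (f(a_{q,0}), …, f(a_{q,q}))`, assemble into an isomorphism of simplicial commutative
monoids `M ⊗ S¹ ≅ B^cy(M)`: in each simplicial degree they are bijective monoid
homomorphisms, and they are compatible with all face and degeneracy maps (on the left the
maps induced on `M ⊗ S¹` by the simplicial structure of `S¹ = Δ[1]/∂Δ[1]` via fiberwise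
products, on the right the face and degeneracy maps of the cyclic bar construction).
Moreover, under this isomorphism the map `M ⊗ S¹ → M` induced by the collapse
`S¹ → Δ[0]` corresponds to the augmentation `B^cy(M) → M` multiplying all coordinates. -/
theorem tensor_circle_iso_bcy (M : Type*) [CommMonoid M] :
    (∀ q : ℕ, Function.Bijective (phiTensor M q)) ∧
    (∀ (q : ℕ) (f g : S1q q → M),
      phiTensor M q (f * g) = phiTensor M q f * phiTensor M q g) ∧
    (∀ (q : ℕ) (i : Fin (q + 2)) (f : S1q (q + 1) → M),
      phiTensor M q (transfer (S1face i) f) = bcyDM i (phiTensor M (q + 1) f)) ∧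
    (∀ (q : ℕ) (i : Fin (q + 1)) (f : S1q q → M),
      phiTensor M (q + 1) (transfer (S1degen i) f) = bcySM i (phiTensor M q f)) ∧
    (∀ (q : ℕ) (f : S1q q → M), ∏ a, f a = ∏ k, phiTensor M q f k) := by
  refine ⟨fun q => ?_, fun _ _ _ => rfl, fun q i f => ?_, fun q i f => ?_, fun q f => ?_⟩
  · exact ((circleEquiv q).symm.arrowCongr (Equiv.refl M)).bijective
  · rw [bcyDM_eq_transfer]
    exact transfer_comp_equiv _ _ (S1face_circleEquiv i) f
  · rw [bcySM_eq_transfer]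
    exact transfer_comp_equiv _ _ (S1degen_circleEquiv i) f
  · exact ((circleEquiv q).prod_comp f).symm
end
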